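/- Let X be the combinatorial arc (ℓ, r, f). Then X has a unique minimal submodule arc of length one (i.e., a simple submodule) if and only if there exists i with ℓ < i ≤ r such that f(j) = below for all ℓ < j < i and f(j) = above for all i ≤ j < r. -/
import Mathlib


/-- A combinatorial arc on the nodes `{0,…,n}`: a left endpoint `l`, a right endpoint
`r` with `l < r ≤ n`, and a choice of side (`true` = above, `false` = below) at each
node strictly between `l` and `r`; the side function is normalized to `false` outside
the open interval `(l, r)`. -/
structure CArc (n : ℕ) where
  l : ℕ
  r : ℕ
  f : ℕ → Bool
  hlr : l < r
  hrn : r ≤ n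
  hnorm : ∀ k, k ≤ l ∨ r ≤ k → f k = false


/-- `X` has a unique simple submodule (length-one submodule arc) if and only if its side
function is `below` on an initial segment of its arrow support and `above` on the rest:
the length-one arc `(i-1, i)` is a submodule arc of `X = (ℓ, r, f)` iff `ℓ < i ≤ r`,
`f (i-1) = below` when `i - 1 ≠ ℓ`, and `f i = above` when `i ≠ r`. -/
theorem stmt_17 (n : ℕ) (X : CArc n) :
    (∃! i : ℕ, X.l < i ∧ i ≤ X.r ∧
        (i - 1 ≠ X.l → X.f (i - 1) = false) ∧ (i ≠ X.r → X.f i = true)) ↔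
    (∃ i : ℕ, X.l < i ∧ i ≤ X.r ∧
        (∀ j, X.l < j → j < i → X.f j = false) ∧
        (∀ j, i ≤ j → j < X.r → X.f j = true)) := by
  constructor
  · rintro ⟨i, ⟨hli, hir, h1, h2⟩, huniq⟩
    refine ⟨i, hli, hir, ?_, ?_⟩
    · intro j hlj hji
      by_contra hfj
      rw [Bool.not_eq_false] at hfj
      have hex : ∃ k, X.l < k ∧ X.f k = true := ⟨j, hlj, hfj⟩
      obtain ⟨hlj0, hfj0⟩ := Nat.find_spec hex
      have hj0j : Nat.find hex ≤ j := Nat.find_min' hex ⟨hlj, hfj⟩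
      have hj0i : Nat.find hex < i := lt_of_le_of_lt hj0j hji
      have heq : Nat.find hex = i := by
        refine huniq _ ⟨hlj0, le_of_lt (lt_of_lt_of_le hj0i hir), ?_, fun _ => hfj0⟩
        intro hne
        have hl1 : X.l < Nat.find hex - 1 := by omega
        have hmin := Nat.find_min hex (show Nat.find hex - 1 < Nat.find hex by omega)
        simp only [not_and] at hmin
        have := hmin hl1
        simpa using this
      omega
    · intro j hij hjr
      by_contra hfj
      rw [Bool.not_eq_true] at hfj
      set P : ℕ → Prop := fun k => i ≤ k ∧ k < X.r ∧ X.f k = false with hP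
      have hPj : P j := ⟨hij, hjr, hfj⟩
      have hjr' : j ≤ X.r := le_of_lt hjr
      have hspec : P (Nat.findGreatest P X.r) :=
        Nat.findGreatest_spec (m := j) (by omega) hPj
      have hle : j ≤ Nat.findGreatest P X.r := Nat.le_findGreatest hjr' hPj
      obtain ⟨hij1, hj1r, hfj1⟩ := hspec
      set j1 := Nat.findGreatest P X.r
      have heq : j1 + 1 = i := by
        refine huniq (j1 + 1) ⟨by omega, by omega, ?_, ?_⟩
        · intro _; simpa using hfj1
        · intro hne
          have hgt := Nat.findGreatest_is_greatest (P := P) (n := X.r) (k := j1 + 1)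
            (by omega) (by omega)
          simp only [hP, not_and] at hgt
          have := hgt (by omega) (by omega)
          simpa using this
      omega
  · rintro ⟨i, hli, hir, hbelow, habove⟩
    refine ⟨i, ⟨hli, hir, ?_, ?_⟩, ?_⟩
    · intro hne
      exact hbelow _ (by omega) (by omega)
    · intro hne
      exact habove _ le_rfl (by omega)
    · rintro k ⟨hlk, hkr, h1, h2⟩
      rcases lt_trichotomy k i with h | h | h
      · have hkne : k ≠ X.r := by omega
        have := h2 hkne
        have := hbelow k hlk h
        simp_all
      · exact h
      · have hne : k - 1 ≠ X.l := by omega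
        have := h1 hne
        have := habove (k - 1) (by omega) (by omega)
        simp_all
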